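/- arXiv:1502.02997 — 5 statements merged into one kernel-verified Lean document; each statement's English description precedes it below -/
import Mathlib

section
/- If A and B are square matrices with nonnegative real entries (of sizes n × n and m × m, respectively), then sm(A ⊗ B) = sm(A)·sm(B), where ⊗ denotes the Kronecker product and sm the scaling mean. -/
open scoped BigOperators Kronecker
open Matrix

/-- The permanent of a square real matrix. -/
noncomputable def perm {ι : Type*} [Fintype ι] [DecidableEq ι] (A : Matrix ι ι ℝ) : ℝ :=
  ∑ σ : Equiv.Perm ι, ∏ i, A i (σ i)

/-- The permanental mean `pm A = (per A / n!) ^ (1/n)`. -/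
noncomputable def pm {ι : Type*} [Fintype ι] [DecidableEq ι] (A : Matrix ι ι ℝ) : ℝ :=
  (perm A / (Nat.factorial (Fintype.card ι) : ℝ)) ^ ((Fintype.card ι : ℝ)⁻¹)

/-- The geometric mean of the entries of a vector. -/
noncomputable def gmVec {ι : Type*} [Fintype ι] (v : ι → ℝ) : ℝ :=
  (∏ i, v i) ^ ((Fintype.card ι : ℝ)⁻¹)

/-- The set of values whose infimum defines the scaling mean. -/
noncomputable def smSet {ι κ : Type*} [Fintype ι] [Fintype κ] (A : Matrix ι κ ℝ) : Set ℝ :=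
  {r : ℝ | ∃ x : ι → ℝ, ∃ y : κ → ℝ, (∀ i, 0 < x i) ∧ (∀ j, 0 < y j) ∧
    r = (∑ i, ∑ j, x i * A i j * y j) / (gmVec x * gmVec y)}

/-- The scaling mean `sm A = (1/(mn)) · inf over positive vectors x, y of xᵀAy/(gm x · gm y)`. -/
noncomputable def sm {ι κ : Type*} [Fintype ι] [Fintype κ] (A : Matrix ι κ ℝ) : ℝ :=
  ((Fintype.card ι : ℝ) * (Fintype.card κ : ℝ))⁻¹ * sInf (smSet A)

/- ### Auxiliary lemmas -/

lemma gmVec_pos' {ι : Type*} [Fintype ι] {v : ι → ℝ} (hv : ∀ i, 0 < v i) : 0 < gmVec v :=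
  Real.rpow_pos_of_pos (Finset.prod_pos fun i _ => hv i) _

lemma smSet_nonempty' {ι κ : Type*} [Fintype ι] [Fintype κ] (A : Matrix ι κ ℝ) :
    (smSet A).Nonempty :=
  ⟨_, fun _ => 1, fun _ => 1, fun _ => one_pos, fun _ => one_pos, rfl⟩

lemma smSet_nonneg' {ι κ : Type*} [Fintype ι] [Fintype κ] {A : Matrix ι κ ℝ}
    (hA : ∀ i j, 0 ≤ A i j) : ∀ r ∈ smSet A, 0 ≤ r := by
  rintro r ⟨x, y, hx, hy, rfl⟩
  apply div_nonneg
  · exact Finset.sum_nonneg fun i _ => Finset.sum_nonneg fun j _ =>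
      mul_nonneg (mul_nonneg (hx i).le (hA i j)) (hy j).le
  · exact (mul_pos (gmVec_pos' hx) (gmVec_pos' hy)).le

lemma smSet_bddBelow' {ι κ : Type*} [Fintype ι] [Fintype κ] {A : Matrix ι κ ℝ}
    (hA : ∀ i j, 0 ≤ A i j) : BddBelow (smSet A) :=
  ⟨0, fun _ hr => smSet_nonneg' hA _ hr⟩

lemma sInf_smSet_nonneg' {ι κ : Type*} [Fintype ι] [Fintype κ] {A : Matrix ι κ ℝ}
    (hA : ∀ i j, 0 ≤ A i j) : 0 ≤ sInf (smSet A) :=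
  Real.sInf_nonneg (smSet_nonneg' hA)

/-- Key lower bound: the infimum bounds every quotient from below. -/
lemma sInf_smSet_mul_le' {ι κ : Type*} [Fintype ι] [Fintype κ] {A : Matrix ι κ ℝ}
    (hA : ∀ i j, 0 ≤ A i j) {x : ι → ℝ} {y : κ → ℝ}
    (hx : ∀ i, 0 < x i) (hy : ∀ j, 0 < y j) :
    sInf (smSet A) * (gmVec x * gmVec y) ≤ ∑ i, ∑ j, x i * A i j * y j := by
  have h : sInf (smSet A) ≤ (∑ i, ∑ j, x i * A i j * y j) / (gmVec x * gmVec y) :=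
    csInf_le (smSet_bddBelow' hA) ⟨x, y, hx, hy, rfl⟩
  have hpos : 0 < gmVec x * gmVec y := mul_pos (gmVec_pos' hx) (gmVec_pos' hy)
  calc sInf (smSet A) * (gmVec x * gmVec y)
      ≤ ((∑ i, ∑ j, x i * A i j * y j) / (gmVec x * gmVec y)) * (gmVec x * gmVec y) :=
        mul_le_mul_of_nonneg_right h hpos.le
    _ = ∑ i, ∑ j, x i * A i j * y j := div_mul_cancel₀ _ hpos.ne'

/-- Geometric mean of an outer-product vector. -/
lemma gmVec_mul' {ι ι' : Type*} [Fintype ι] [Fintype ι']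
    (hc : Fintype.card ι ≠ 0) (hc' : Fintype.card ι' ≠ 0)
    {x : ι → ℝ} {x' : ι' → ℝ} (hx : ∀ i, 0 < x i) (hx' : ∀ k, 0 < x' k) :
    gmVec (fun p : ι × ι' => x p.1 * x' p.2) = gmVec x * gmVec x' := by
  have hP : 0 < ∏ i, x i := Finset.prod_pos fun i _ => hx i
  have hQ : 0 < ∏ k, x' k := Finset.prod_pos fun k _ => hx' k
  have hcR : (Fintype.card ι : ℝ) ≠ 0 := Nat.cast_ne_zero.mpr hc
  have hcR' : (Fintype.card ι' : ℝ) ≠ 0 := Nat.cast_ne_zero.mpr hc'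
  have h1 : (∏ p : ι × ι', x p.1 * x' p.2)
      = (∏ i, x i) ^ (Fintype.card ι' : ℕ) * (∏ k, x' k) ^ (Fintype.card ι : ℕ) := by
    rw [Fintype.prod_prod_type]
    simp only [Finset.prod_mul_distrib, Finset.prod_const, Finset.card_univ]
    rw [Finset.prod_pow]
  have e1 : (Fintype.card ι' : ℝ) * ((Fintype.card ι * Fintype.card ι' : ℕ) : ℝ)⁻¹
      = (Fintype.card ι : ℝ)⁻¹ := by
    rw [Nat.cast_mul, mul_inv]; field_simp; try ring
  have e2 : (Fintype.card ι : ℝ) * ((Fintype.card ι * Fintype.card ι' : ℕ) : ℝ)⁻¹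
      = (Fintype.card ι' : ℝ)⁻¹ := by
    rw [Nat.cast_mul, mul_inv]; field_simp; try ring
  unfold gmVec
  rw [h1, Fintype.card_prod]
  rw [Real.mul_rpow (by positivity) (by positivity)]
  rw [← Real.rpow_natCast (∏ i, x i), ← Real.rpow_natCast (∏ k, x' k),
    ← Real.rpow_mul hP.le, ← Real.rpow_mul hQ.le, e1, e2]

/-- Geometric mean of columnwise geometric means is the total geometric mean. -/
lemma gmVec_gmVec' {ι ι' : Type*} [Fintype ι] [Fintype ι'] {z : ι × ι' → ℝ}
    (hz : ∀ p, 0 < z p) :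
    gmVec (fun k : ι' => gmVec (fun i : ι => z (i, k))) = gmVec z := by
  have hpos : (0:ℝ) ≤ ∏ k : ι', ∏ i : ι, z (i, k) :=
    (Finset.prod_pos fun k _ => Finset.prod_pos fun i _ => hz (i, k)).le
  unfold gmVec
  rw [Real.finset_prod_rpow _ _ (fun k _ => (Finset.prod_pos fun i _ => hz (i, k)).le),
    ← Real.rpow_mul hpos, Fintype.prod_prod_type, Finset.prod_comm, Fintype.card_prod]
  congr 1
  push_cast
  rw [mul_inv]

lemma kron_sum_rearrange' {n m : ℕ} (A : Matrix (Fin n) (Fin n) ℝ) (B : Matrix (Fin m) (Fin m) ℝ)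
    (z w : Fin n × Fin m → ℝ) :
    ∑ p : Fin n × Fin m, ∑ q : Fin n × Fin m, z p * (A ⊗ₖ B) p q * w q
      = ∑ k, ∑ l, B k l * ∑ i, ∑ j, z (i, k) * A i j * w (j, l) := by
  simp only [Fintype.sum_prod_type, Matrix.kroneckerMap_apply, Finset.mul_sum]
  rw [Finset.sum_comm]
  refine Finset.sum_congr rfl fun k _ => ?_
  conv_rhs => rw [Finset.sum_comm]
  refine Finset.sum_congr rfl fun i _ => ?_
  conv_rhs => rw [Finset.sum_comm]
  refine Finset.sum_congr rfl fun j _ => Finset.sum_congr rfl fun l _ => ?_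
  ring

lemma kron_sum_factor' {n m : ℕ} (A : Matrix (Fin n) (Fin n) ℝ) (B : Matrix (Fin m) (Fin m) ℝ)
    (x y : Fin n → ℝ) (x' y' : Fin m → ℝ) :
    ∑ p : Fin n × Fin m, ∑ q : Fin n × Fin m,
        (x p.1 * x' p.2) * (A ⊗ₖ B) p q * (y q.1 * y' q.2)
      = (∑ i, ∑ j, x i * A i j * y j) * (∑ k, ∑ l, x' k * B k l * y' l) := by
  simp only [Fintype.sum_prod_type, Matrix.kroneckerMap_apply]
  rw [Finset.sum_mul_sum]
  refine Finset.sum_congr rfl fun i _ => Finset.sum_congr rfl fun k _ => ?_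
  rw [Finset.sum_mul_sum]
  exact Finset.sum_congr rfl fun j _ => Finset.sum_congr rfl fun l _ => by ring

/-- The scaling mean is multiplicative with respect to the Kronecker product. -/
theorem stmt_4 {n m : ℕ} (A : Matrix (Fin n) (Fin n) ℝ) (B : Matrix (Fin m) (Fin m) ℝ)
    (hA : ∀ i j, 0 ≤ A i j) (hB : ∀ i j, 0 ≤ B i j) :
    sm (A ⊗ₖ B) = sm A * sm B := by
  rcases Nat.eq_zero_or_pos n with hn | hn
  · subst hn; simp [sm]
  rcases Nat.eq_zero_or_pos m with hm | hm
  · subst hm; simp [sm]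
  have hcn : Fintype.card (Fin n) ≠ 0 := by simp [hn.ne']
  have hcm : Fintype.card (Fin m) ≠ 0 := by simp [hm.ne']
  have hAB : ∀ p q, 0 ≤ (A ⊗ₖ B) p q := fun p q => mul_nonneg (hA _ _) (hB _ _)
  -- the key infimum identity
  have key : sInf (smSet (A ⊗ₖ B)) = sInf (smSet A) * sInf (smSet B) := by
    apply le_antisymm
    · -- ≤ : product test vectors
      have hle : ∀ a ∈ smSet A, ∀ b ∈ smSet B, sInf (smSet (A ⊗ₖ B)) ≤ a * b := by
        rintro a ⟨x, y, hx, hy, rfl⟩ b ⟨x', y', hx', hy', rfl⟩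
        have hmem : (∑ p : Fin n × Fin m, ∑ q : Fin n × Fin m,
              (x p.1 * x' p.2) * (A ⊗ₖ B) p q * (y q.1 * y' q.2)) /
              (gmVec (fun p : Fin n × Fin m => x p.1 * x' p.2) *
               gmVec (fun q : Fin n × Fin m => y q.1 * y' q.2)) ∈ smSet (A ⊗ₖ B) :=
          ⟨fun p => x p.1 * x' p.2, fun q => y q.1 * y' q.2,
            fun p => mul_pos (hx p.1) (hx' p.2), fun q => mul_pos (hy q.1) (hy' q.2), rfl⟩
        have h := csInf_le (smSet_bddBelow' hAB) hmem
        calc sInf (smSet (A ⊗ₖ B)) ≤ _ := h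
          _ = (∑ i, ∑ j, x i * A i j * y j) / (gmVec x * gmVec y) *
              ((∑ k, ∑ l, x' k * B k l * y' l) / (gmVec x' * gmVec y')) := by
            rw [kron_sum_factor', gmVec_mul' hcn hcm hx hx', gmVec_mul' hcn hcm hy hy',
              div_mul_div_comm]
            congr 1
            ring
      have hstep : ∀ b ∈ smSet B, sInf (smSet (A ⊗ₖ B)) ≤ sInf (smSet A) * b := by
        intro b hb
        rcases (smSet_nonneg' hB b hb).eq_or_lt with hb0 | hb0
        · obtain ⟨a0, ha0⟩ := smSet_nonempty' A
          have := hle a0 ha0 b hb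
          rw [← hb0] at this ⊢
          simpa using this
        · have h1 : sInf (smSet (A ⊗ₖ B)) / b ≤ sInf (smSet A) :=
            le_csInf (smSet_nonempty' A) fun a ha => (div_le_iff₀ hb0).mpr (hle a ha b hb)
          exact (div_le_iff₀ hb0).mp h1
      rcases (sInf_smSet_nonneg' hA).eq_or_lt with hA0 | hA0
      · obtain ⟨b0, hb0⟩ := smSet_nonempty' B
        have := hstep b0 hb0
        rw [← hA0] at this ⊢
        simpa using this
      · have h1 : sInf (smSet (A ⊗ₖ B)) / sInf (smSet A) ≤ sInf (smSet B) :=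
          le_csInf (smSet_nonempty' B) fun b hb => by
            rw [div_le_iff₀ hA0]
            calc sInf (smSet (A ⊗ₖ B)) ≤ sInf (smSet A) * b := hstep b hb
              _ = b * sInf (smSet A) := mul_comm _ _
        calc sInf (smSet (A ⊗ₖ B))
            = sInf (smSet (A ⊗ₖ B)) / sInf (smSet A) * sInf (smSet A) :=
              (div_mul_cancel₀ _ hA0.ne').symm
          _ ≤ sInf (smSet B) * sInf (smSet A) := mul_le_mul_of_nonneg_right h1 hA0.le
          _ = sInf (smSet A) * sInf (smSet B) := mul_comm _ _
    · -- ≥ : the columnwise geometric-mean argument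
      apply le_csInf (smSet_nonempty' _)
      rintro r ⟨z, w, hz, hw, rfl⟩
      have hpos : 0 < gmVec z * gmVec w := mul_pos (gmVec_pos' hz) (gmVec_pos' hw)
      rw [le_div_iff₀ hpos]
      set u : Fin m → ℝ := fun k => gmVec (fun i => z (i, k)) with hu_def
      set v : Fin m → ℝ := fun l => gmVec (fun j => w (j, l)) with hv_def
      have hu : ∀ k, 0 < u k := fun k => gmVec_pos' fun i => hz (i, k)
      have hv : ∀ l, 0 < v l := fun l => gmVec_pos' fun j => hw (j, l)
      have hguz : gmVec u = gmVec z := gmVec_gmVec' hz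
      have hgvw : gmVec v = gmVec w := gmVec_gmVec' hw
      calc sInf (smSet A) * sInf (smSet B) * (gmVec z * gmVec w)
          = sInf (smSet A) * (sInf (smSet B) * (gmVec u * gmVec v)) := by
            rw [hguz, hgvw]; ring
        _ ≤ sInf (smSet A) * (∑ k, ∑ l, u k * B k l * v l) :=
            mul_le_mul_of_nonneg_left (sInf_smSet_mul_le' hB hu hv) (sInf_smSet_nonneg' hA)
        _ = ∑ k, ∑ l, B k l * (sInf (smSet A) * (u k * v l)) := by
            rw [Finset.mul_sum]
            refine Finset.sum_congr rfl fun k _ => ?_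
            rw [Finset.mul_sum]
            exact Finset.sum_congr rfl fun l _ => by ring
        _ ≤ ∑ k, ∑ l, B k l * ∑ i, ∑ j, z (i, k) * A i j * w (j, l) :=
            Finset.sum_le_sum fun k _ => Finset.sum_le_sum fun l _ =>
              mul_le_mul_of_nonneg_left
                (sInf_smSet_mul_le' hA (fun i => hz (i, k)) (fun j => hw (j, l))) (hB k l)
        _ = ∑ p : Fin n × Fin m, ∑ q : Fin n × Fin m, z p * (A ⊗ₖ B) p q * w q :=
            (kron_sum_rearrange' A B z w).symm
  unfold sm
  rw [key]
  simp only [Fintype.card_prod, Fintype.card_fin]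
  push_cast
  ring
end

section
/- The scaling mean, as a function from the set of m × n matrices with nonnegative real entries to [0,∞), is concave and continuous. -/
open scoped BigOperators Kronecker
open Matrix

/-!
Up to the factor `1/(mn)`, `sm A` is the infimum, over pairs of positive vectors `x, y`, of the
linear functionals `A ↦ xᵀ A y / (gm x · gm y)`. An infimum of linear functionals is concave and
upper semicontinuous. Lower semicontinuity on the nonnegative matrices comes from monotonicity and
homogeneity: every nonnegative `B` close enough to `A` dominates `t • A` entrywise for a given
`t < 1`, so its value is at least `t` times that of `A`.
-/

open Filter Set Topology

lemma convex_setOf_nonneg_entries {ι κ : Type*} :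
    Convex ℝ {A : Matrix ι κ ℝ | ∀ i j, 0 ≤ A i j} :=
  fun _ hA _ hB _ _ ha hb _ i j =>
    add_nonneg (mul_nonneg ha (hA i j)) (mul_nonneg hb (hB i j))

section ScalingInf

variable {ι κ : Type*} [Fintype ι] [Fintype κ]

abbrev PosVec (ι : Type*) := {x : ι → ℝ // ∀ i, 0 < x i}

instance : Nonempty (PosVec ι) := ⟨⟨1, fun _ => one_pos⟩⟩

lemma gmVec_pos {x : ι → ℝ} (hx : ∀ i, 0 < x i) : 0 < gmVec x :=
  Real.rpow_pos_of_pos (Finset.prod_pos fun i _ => hx i) _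

noncomputable def scalingForm (x : ι → ℝ) (y : κ → ℝ) : Matrix ι κ ℝ →ₗ[ℝ] ℝ where
  toFun A := (∑ i, ∑ j, x i * A i j * y j) / (gmVec x * gmVec y)
  map_add' A B := by
    simp only [Matrix.add_apply, mul_add, add_mul, Finset.sum_add_distrib, add_div]
  map_smul' t A := by
    simp only [Matrix.smul_apply, smul_eq_mul, RingHom.id_apply]
    rw [← mul_div_assoc, Finset.mul_sum]
    congr 1
    refine Finset.sum_congr rfl fun i _ => ?_
    rw [Finset.mul_sum]
    exact Finset.sum_congr rfl fun j _ => by ring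

lemma scalingForm_nonneg {x : ι → ℝ} {y : κ → ℝ} (hx : ∀ i, 0 < x i) (hy : ∀ j, 0 < y j)
    {A : Matrix ι κ ℝ} (hA : ∀ i j, 0 ≤ A i j) : 0 ≤ scalingForm x y A :=
  div_nonneg
    (Finset.sum_nonneg fun i _ => Finset.sum_nonneg fun j _ =>
      mul_nonneg (mul_nonneg (hx i).le (hA i j)) (hy j).le)
    (mul_pos (gmVec_pos hx) (gmVec_pos hy)).le

lemma scalingForm_mono {x : ι → ℝ} {y : κ → ℝ} (hx : ∀ i, 0 < x i) (hy : ∀ j, 0 < y j)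
    {A B : Matrix ι κ ℝ} (hAB : ∀ i j, A i j ≤ B i j) : scalingForm x y A ≤ scalingForm x y B := by
  show (∑ i, ∑ j, x i * A i j * y j) / (gmVec x * gmVec y) ≤
    (∑ i, ∑ j, x i * B i j * y j) / (gmVec x * gmVec y)
  gcongr with i _ j _
  exacts [(mul_pos (gmVec_pos hx) (gmVec_pos hy)).le, (hy j).le, (hx i).le, hAB i j]

noncomputable def scalingInf (A : Matrix ι κ ℝ) : ℝ :=
  ⨅ p : PosVec ι × PosVec κ, scalingForm p.1.1 p.2.1 A

lemma sm_eq_mul_scalingInf (A : Matrix ι κ ℝ) :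
    sm A = ((Fintype.card ι : ℝ) * (Fintype.card κ : ℝ))⁻¹ * scalingInf A := by
  have hrange : smSet A = range fun p : PosVec ι × PosVec κ => scalingForm p.1.1 p.2.1 A := by
    ext r
    constructor
    · rintro ⟨x, y, hx, hy, rfl⟩
      exact ⟨(⟨x, hx⟩, ⟨y, hy⟩), rfl⟩
    · rintro ⟨⟨⟨x, hx⟩, ⟨y, hy⟩⟩, rfl⟩
      exact ⟨x, y, hx, hy, rfl⟩
  rw [sm, hrange]
  rfl

lemma bddBelow_range_scalingForm {A : Matrix ι κ ℝ} (hA : ∀ i j, 0 ≤ A i j) :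
    BddBelow (range fun p : PosVec ι × PosVec κ => scalingForm p.1.1 p.2.1 A) :=
  ⟨0, by rintro _ ⟨p, rfl⟩; exact scalingForm_nonneg p.1.2 p.2.2 hA⟩

lemma mul_scalingInf_le {A B : Matrix ι κ ℝ} (hA : ∀ i j, 0 ≤ A i j) {t : ℝ} (ht : 0 ≤ t)
    (hAB : ∀ i j, t * A i j ≤ B i j) : t * scalingInf A ≤ scalingInf B := by
  refine le_ciInf fun p => ?_
  calc t * scalingInf A ≤ t * scalingForm p.1.1 p.2.1 A :=
        mul_le_mul_of_nonneg_left (ciInf_le (bddBelow_range_scalingForm hA) p) ht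
    _ = scalingForm p.1.1 p.2.1 (t • A) := (map_smul _ t A).symm
    _ ≤ scalingForm p.1.1 p.2.1 B := scalingForm_mono p.1.2 p.2.2 hAB

lemma concaveOn_scalingInf :
    ConcaveOn ℝ {A : Matrix ι κ ℝ | ∀ i j, 0 ≤ A i j} scalingInf := by
  refine ⟨convex_setOf_nonneg_entries, fun A hA B hB a b ha hb _ => le_ciInf fun p => ?_⟩
  simp only [map_add, map_smul, smul_eq_mul]
  exact add_le_add
    (mul_le_mul_of_nonneg_left (ciInf_le (bddBelow_range_scalingForm hA) p) ha)
    (mul_le_mul_of_nonneg_left (ciInf_le (bddBelow_range_scalingForm hB) p) hb)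

lemma upperSemicontinuousOn_scalingInf :
    UpperSemicontinuousOn scalingInf {A : Matrix ι κ ℝ | ∀ i j, 0 ≤ A i j} :=
  upperSemicontinuousOn_ciInf (fun _ hA => bddBelow_range_scalingForm hA) fun p =>
    (scalingForm p.1.1 p.2.1).continuous_of_finiteDimensional.upperSemicontinuous
      |>.upperSemicontinuousOn _

lemma eventually_mul_le_of_nonneg {A₀ : Matrix ι κ ℝ} (hA₀ : ∀ i j, 0 ≤ A₀ i j) {t : ℝ}
    (ht : t < 1) :
    ∀ᶠ B in 𝓝[{A | ∀ i j, 0 ≤ A i j}] A₀, ∀ i j, t * A₀ i j ≤ B i j := by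
  simp only [eventually_all]
  intro i j
  rcases (hA₀ i j).eq_or_lt with hzero | hpos
  · filter_upwards [self_mem_nhdsWithin] with B hB
    simpa [← hzero] using hB i j
  · have hlt : t * A₀ i j < A₀ i j := by nlinarith
    have hcont : Continuous fun B : Matrix ι κ ℝ => B i j := continuous_id.matrix_elem i j
    exact nhdsWithin_le_nhds <|
      (hcont.continuousAt.eventually (lt_mem_nhds hlt)).mono fun _ hB => hB.le

lemma lowerSemicontinuousOn_scalingInf :
    LowerSemicontinuousOn scalingInf {A : Matrix ι κ ℝ | ∀ i j, 0 ≤ A i j} := by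
  intro A₀ hA₀ c hc
  obtain ⟨t, ht0, ht1, hct⟩ : ∃ t : ℝ, 0 ≤ t ∧ t < 1 ∧ c < t * scalingInf A₀ := by
    rcases lt_or_ge c 0 with hneg | hnonneg
    · exact ⟨0, le_rfl, one_pos, by rwa [zero_mul]⟩
    · have hpos : 0 < scalingInf A₀ := hnonneg.trans_lt hc
      obtain ⟨t, hct, ht1⟩ := exists_between ((div_lt_one hpos).2 hc)
      exact ⟨t, (div_nonneg hnonneg hpos.le).trans hct.le, ht1, (div_lt_iff₀ hpos).1 hct⟩
  filter_upwards [eventually_mul_le_of_nonneg hA₀ ht1] with B hB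
  exact hct.trans_le (mul_scalingInf_le hA₀ ht0 hB)

lemma continuousOn_scalingInf :
    ContinuousOn scalingInf {A : Matrix ι κ ℝ | ∀ i j, 0 ≤ A i j} :=
  continuousOn_iff_lower_upperSemicontinuousOn.2
    ⟨lowerSemicontinuousOn_scalingInf, upperSemicontinuousOn_scalingInf⟩

end ScalingInf

/-- The scaling mean is a concave and continuous function on the set of
nonnegative `m × n` matrices. -/
theorem stmt_5 (m n : ℕ) :
    ConcaveOn ℝ {A : Matrix (Fin m) (Fin n) ℝ | ∀ i j, 0 ≤ A i j} sm ∧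
    ContinuousOn sm {A : Matrix (Fin m) (Fin n) ℝ | ∀ i j, 0 ≤ A i j} := by
  have hsm : (sm : Matrix (Fin m) (Fin n) ℝ → ℝ) =
      fun A => ((m : ℝ) * n)⁻¹ * scalingInf A := by
    funext A
    simpa using sm_eq_mul_scalingInf A
  rw [hsm]
  exact ⟨concaveOn_scalingInf.smul (by positivity),
    continuousOn_const.mul continuousOn_scalingInf⟩
end

section
/- Let λ > 1, let A be an n × n matrix all of whose entries lie in [λ⁻¹, λ], and let s be the sum of all entries of A. Then for all indices i, j ∈ {1,…,n}: λ⁻⁵·n⁻¹·per(A) ≤ λ⁻⁴·n·s⁻¹·per(A) ≤ per(A(i|j)) ≤ λ⁴·n·s⁻¹·per(A) ≤ λ⁵·n⁻¹·per(A), where A(i|j) denotes the (n−1) × (n−1) matrix obtained from A by deleting the i-th row and the j-th column. -/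
open scoped BigOperators Kronecker
open Matrix

/-
Expanding `per A` along each of its `n` columns gives `n · per A = ∑ p q, A p q · per A(p|q)`.
Moving the deleted column of a minor from `j` to `j'` amounts, after a column permutation, to
replacing a single column of entries `A · j'` by `A · j`; since all entries lie in `[λ⁻¹, λ]`,
this changes the permanent by a factor at most `λ²`. Doing the same with rows, the permanents of
any two minors are within a factor `λ⁴` of each other, so `s · per A(i|j)` lies between
`λ⁻⁴ n per A` and `λ⁴ n per A`. The outer bounds follow from `n² λ⁻¹ ≤ s ≤ n² λ`.
-/

open Equiv Finset

theorem Fin.range_swap_comp_succAbove {n : ℕ} (j j' : Fin (n + 1)) :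
    Set.range (Equiv.swap j j' ∘ j.succAbove) = Set.range j'.succAbove := by
  rw [Set.range_comp, Fin.range_succAbove, Fin.range_succAbove,
    Set.image_compl_eq (Equiv.bijective _), Set.image_singleton, Equiv.swap_apply_left]

namespace Matrix

variable {R : Type*} [CommSemiring R]

theorem permanent_submatrix_congr_range_left {α β κ : Type*} [Fintype κ] [DecidableEq κ]
    (A : Matrix α β R) {f f' : κ → α} (hf : f.Injective) (hf' : f'.Injective)
    (h : Set.range f = Set.range f') (g : κ → β) :
    (A.submatrix f g).permanent = (A.submatrix f' g).permanent := by
  let π : Perm κ := (Equiv.ofInjective f hf).trans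
    ((Equiv.setCongr h).trans (Equiv.ofInjective f' hf').symm)
  have hπ : ∀ k, f' (π k) = f k := fun k => by
    simp [π, Equiv.apply_ofInjective_symm]
  rw [← permanent_permute_cols π (A.submatrix f' g)]
  congr 1
  ext a b
  simp [hπ]

theorem permanent_submatrix_congr_range_right {α β κ : Type*} [Fintype κ] [DecidableEq κ]
    (A : Matrix α β R) (f : κ → α) {g g' : κ → β} (hg : g.Injective) (hg' : g'.Injective)
    (h : Set.range g = Set.range g') :
    (A.submatrix f g).permanent = (A.submatrix f g').permanent := by
  rw [← permanent_transpose, transpose_submatrix,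
    permanent_submatrix_congr_range_left Aᵀ hg hg' h, ← transpose_submatrix, permanent_transpose]

theorem permanent_succ_column_zero {n : ℕ} (A : Matrix (Fin (n + 1)) (Fin (n + 1)) R) :
    A.permanent = ∑ i, A i 0 * (A.submatrix i.succAbove Fin.succ).permanent := by
  rw [permanent, univ_perm_fin_succ, ← univ_product_univ, sum_map, sum_product]
  refine sum_congr rfl fun p _ => ?_
  have hrange : Set.range (Equiv.swap (0 : Fin (n + 1)) p ∘ Fin.succ) = Set.range p.succAbove := by
    rw [← Fin.succAbove_zero, Fin.range_swap_comp_succAbove]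
  rw [← permanent_submatrix_congr_range_left A
    ((Equiv.swap (0 : Fin (n + 1)) p).injective.comp (Fin.succ_injective n))
    Fin.succAbove_right_injective hrange, permanent, mul_sum]
  refine sum_congr rfl fun σ _ => ?_
  simp [Fin.prod_univ_succ]

theorem permanent_succ_column {n : ℕ} (A : Matrix (Fin (n + 1)) (Fin (n + 1)) R)
    (j : Fin (n + 1)) :
    A.permanent = ∑ i, A i j * (A.submatrix i.succAbove j.succAbove).permanent := by
  rw [← permanent_permute_rows (Equiv.swap (0 : Fin (n + 1)) j), permanent_succ_column_zero]
  refine sum_congr rfl fun i _ => ?_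
  rw [submatrix_apply, submatrix_submatrix, Function.id_comp, swap_apply_left, id,
    ← Fin.succAbove_zero, permanent_submatrix_congr_range_right _ _
    ((Equiv.swap (0 : Fin (n + 1)) j).injective.comp Fin.succAbove_right_injective)
    Fin.succAbove_right_injective (Fin.range_swap_comp_succAbove _ _)]

theorem sum_sum_mul_permanent_submatrix {n : ℕ} (A : Matrix (Fin (n + 1)) (Fin (n + 1)) R) :
    ∑ i, ∑ j, A i j * (A.submatrix i.succAbove j.succAbove).permanent = (n + 1) * A.permanent := by
  rw [sum_comm]
  simp_rw [← permanent_succ_column]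
  simp

section Ordered

variable [PartialOrder R] [IsOrderedRing R] {ι : Type*} [Fintype ι] [DecidableEq ι]

theorem permanent_nonneg {M : Matrix ι ι R} (hM : ∀ i j, 0 ≤ M i j) : 0 ≤ M.permanent :=
  sum_nonneg fun _ _ => prod_nonneg fun _ _ => hM _ _

theorem permanent_mono {M M' : Matrix ι ι R} (hM : ∀ i j, 0 ≤ M i j)
    (h : ∀ i j, M i j ≤ M' i j) : M.permanent ≤ M'.permanent :=
  sum_le_sum fun _ _ => prod_le_prod (fun _ _ => hM _ _) fun _ _ => h _ _

theorem permanent_submatrix_succAbove_le {α : Type*} {n : ℕ} (A : Matrix α (Fin (n + 1)) R)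
    (r : Fin n → α) (hA : ∀ a b, 0 ≤ A a b) {c : R} (hc₁ : 1 ≤ c)
    (hc : ∀ a b b', A a b ≤ c * A a b') (j j' : Fin (n + 1)) :
    (A.submatrix r j.succAbove).permanent ≤ c * (A.submatrix r j'.succAbove).permanent := by
  set M := A.submatrix r j.succAbove
  obtain rfl | hne := eq_or_ne j j'
  · exact le_mul_of_one_le_left (permanent_nonneg fun _ _ => hA _ _) hc₁
  obtain ⟨k, hk⟩ := Fin.exists_succAbove_eq hne.symm
  -- after swapping columns `j` and `j'`, the two minors differ only in their column `k`
  have hswap :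
      A.submatrix r (Equiv.swap j j' ∘ j.succAbove) = M.updateCol k (fun a => A (r a) j) := by
    ext a b
    obtain rfl | hb := eq_or_ne b k
    · simp [hk]
    · have hb' : j.succAbove b ≠ j' := hk ▸ Fin.succAbove_right_injective.ne hb
      simp [M, hb, swap_apply_of_ne_of_ne (Fin.succAbove_ne j b) hb']
  calc M.permanent
      ≤ (M.updateCol k (c • fun a => A (r a) j)).permanent := by
        refine permanent_mono (fun _ _ => hA _ _) fun a b => ?_
        obtain rfl | hb := eq_or_ne b k
        · simpa [M, hk] using hc (r a) j' j
        · simp [hb]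
    _ = c * (A.submatrix r (Equiv.swap j j' ∘ j.succAbove)).permanent := by
        rw [permanent_updateCol_smul, hswap]
    _ = c * (A.submatrix r j'.succAbove).permanent := by
        rw [permanent_submatrix_congr_range_right _ _
          ((Equiv.swap j j').injective.comp Fin.succAbove_right_injective)
          Fin.succAbove_right_injective (Fin.range_swap_comp_succAbove j j')]

theorem permanent_submatrix_succAbove_le_sq {n : ℕ} (A : Matrix (Fin (n + 1)) (Fin (n + 1)) R)
    (hA : ∀ a b, 0 ≤ A a b) {c : R} (hc₁ : 1 ≤ c) (hc : ∀ a b a' b', A a b ≤ c * A a' b')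
    (i j i' j' : Fin (n + 1)) :
    (A.submatrix i.succAbove j.succAbove).permanent ≤
      c ^ 2 * (A.submatrix i'.succAbove j'.succAbove).permanent := by
  have hrow : (A.submatrix i.succAbove j'.succAbove).permanent ≤
      c * (A.submatrix i'.succAbove j'.succAbove).permanent := by
    simp only [← permanent_transpose (A.submatrix _ _), transpose_submatrix]
    exact permanent_submatrix_succAbove_le Aᵀ _ (fun a b => hA b a) hc₁
      (fun a b b' => hc b a b' a) i i'
  calc (A.submatrix i.succAbove j.succAbove).permanent
      ≤ c * (A.submatrix i.succAbove j'.succAbove).permanent :=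
        permanent_submatrix_succAbove_le A _ hA hc₁ (fun a b b' => hc a b a b') j j'
    _ ≤ c * (c * (A.submatrix i'.succAbove j'.succAbove).permanent) := by
        gcongr
        exact zero_le_one.trans hc₁
    _ = c ^ 2 * (A.submatrix i'.succAbove j'.succAbove).permanent := by ring

theorem sum_entries_mul_permanent_submatrix_le {n : ℕ}
    (A : Matrix (Fin (n + 1)) (Fin (n + 1)) R) (hA : ∀ a b, 0 ≤ A a b) {c : R} (hc₁ : 1 ≤ c)
    (hc : ∀ a b a' b', A a b ≤ c * A a' b') (i j : Fin (n + 1)) :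
    (∑ p, ∑ q, A p q) * (A.submatrix i.succAbove j.succAbove).permanent ≤
      c ^ 2 * ((n + 1) * A.permanent) := by
  rw [← sum_sum_mul_permanent_submatrix, mul_sum, sum_mul]
  refine sum_le_sum fun p _ => ?_
  rw [mul_sum, sum_mul]
  refine sum_le_sum fun q _ => ?_
  rw [mul_left_comm]
  exact mul_le_mul_of_nonneg_left (permanent_submatrix_succAbove_le_sq A hA hc₁ hc i j p q) (hA p q)

theorem mul_permanent_le_sum_entries_mul {n : ℕ}
    (A : Matrix (Fin (n + 1)) (Fin (n + 1)) R) (hA : ∀ a b, 0 ≤ A a b) {c : R} (hc₁ : 1 ≤ c)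
    (hc : ∀ a b a' b', A a b ≤ c * A a' b') (i j : Fin (n + 1)) :
    (n + 1) * A.permanent ≤
      c ^ 2 * ((∑ p, ∑ q, A p q) * (A.submatrix i.succAbove j.succAbove).permanent) := by
  rw [← sum_sum_mul_permanent_submatrix, sum_mul, mul_sum]
  refine sum_le_sum fun p _ => ?_
  rw [sum_mul, mul_sum]
  refine sum_le_sum fun q _ => ?_
  rw [mul_left_comm]
  exact mul_le_mul_of_nonneg_left (permanent_submatrix_succAbove_le_sq A hA hc₁ hc p q i j) (hA p q)

theorem sq_mul_le_sum_entries {n : ℕ} (A : Matrix (Fin n) (Fin n) R) {a : R}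
    (h : ∀ i j, a ≤ A i j) : (n : R) ^ 2 * a ≤ ∑ i, ∑ j, A i j :=
  calc (n : R) ^ 2 * a = ∑ _i : Fin n, ∑ _j : Fin n, a := by simp; ring
    _ ≤ ∑ i, ∑ j, A i j := sum_le_sum fun i _ => sum_le_sum fun j _ => h i j

theorem sum_entries_le_sq_mul {n : ℕ} (A : Matrix (Fin n) (Fin n) R) {b : R}
    (h : ∀ i j, A i j ≤ b) : ∑ i, ∑ j, A i j ≤ (n : R) ^ 2 * b :=
  calc ∑ i, ∑ j, A i j ≤ ∑ _i : Fin n, ∑ _j : Fin n, b :=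
        sum_le_sum fun i _ => sum_le_sum fun j _ => h i j
    _ = (n : R) ^ 2 * b := by simp; ring

end Ordered

end Matrix

theorem perm_eq_permanent {ι : Type*} [Fintype ι] [DecidableEq ι] (A : Matrix ι ι ℝ) :
    perm A = A.permanent :=
  permanent_transpose A

/-- Bounds for the permanents of the minors of a `λ`-bounded matrix:
if every entry of the `n × n` matrix `A` (here `n = N + 1 ≥ 1`) lies in `[λ⁻¹, λ]` and
`s` is the sum of the entries of `A`, then
`λ⁻⁵·n⁻¹·per A ≤ λ⁻⁴·n·s⁻¹·per A ≤ per A(i|j) ≤ λ⁴·n·s⁻¹·per A ≤ λ⁵·n⁻¹·per A`. -/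
theorem stmt_12 {N : ℕ} (lam : ℝ) (hlam : 1 < lam)
    (A : Matrix (Fin (N + 1)) (Fin (N + 1)) ℝ)
    (hA : ∀ i j, lam⁻¹ ≤ A i j ∧ A i j ≤ lam)
    (i j : Fin (N + 1)) :
    lam⁻¹ ^ 5 * ((N + 1 : ℝ))⁻¹ * perm A ≤
        lam⁻¹ ^ 4 * (N + 1 : ℝ) * (∑ p, ∑ q, A p q)⁻¹ * perm A ∧
    lam⁻¹ ^ 4 * (N + 1 : ℝ) * (∑ p, ∑ q, A p q)⁻¹ * perm A ≤
        perm (A.submatrix i.succAbove j.succAbove) ∧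
    perm (A.submatrix i.succAbove j.succAbove) ≤
        lam ^ 4 * (N + 1 : ℝ) * (∑ p, ∑ q, A p q)⁻¹ * perm A ∧
    lam ^ 4 * (N + 1 : ℝ) * (∑ p, ∑ q, A p q)⁻¹ * perm A ≤
        lam ^ 5 * ((N + 1 : ℝ))⁻¹ * perm A := by
  have hlam₀ : 0 < lam := zero_lt_one.trans hlam
  have hA₀ : ∀ a b, 0 ≤ A a b := fun a b => (inv_pos.2 hlam₀).le.trans (hA a b).1
  have hc : ∀ a b a' b', A a b ≤ lam ^ 2 * A a' b' := fun a b a' b' =>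
    calc A a b ≤ lam ^ 2 * lam⁻¹ := by rw [sq, mul_inv_cancel_right₀ hlam₀.ne']; exact (hA a b).2
      _ ≤ lam ^ 2 * A a' b' := by gcongr; exact (hA a' b').1
  have hupper := sum_entries_mul_permanent_submatrix_le A hA₀ (one_le_pow₀ hlam.le) hc i j
  have hlower := mul_permanent_le_sum_entries_mul A hA₀ (one_le_pow₀ hlam.le) hc i j
  have hs_ge := sq_mul_le_sum_entries A fun p q => (hA p q).1
  have hs_le := sum_entries_le_sq_mul A fun p q => (hA p q).2
  simp only [← perm_eq_permanent, ← pow_mul, Nat.reduceMul, Nat.cast_add_one]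
    at hupper hlower hs_ge hs_le
  set s := ∑ p, ∑ q, A p q
  have hs : 0 < s := lt_of_lt_of_le (by positivity) hs_ge
  have hP : 0 ≤ perm A := perm_eq_permanent A ▸ permanent_nonneg hA₀
  refine ⟨?_, ?_, ?_, ?_⟩
  · gcongr ?_ * perm A
    calc lam⁻¹ ^ 5 * ((N + 1 : ℝ))⁻¹ = lam⁻¹ ^ 4 * (N + 1) * ((N + 1) ^ 2 * lam)⁻¹ := by
          field_simp
      _ ≤ lam⁻¹ ^ 4 * (N + 1) * s⁻¹ := by gcongr
  · rw [show lam⁻¹ ^ 4 * (N + 1) * s⁻¹ * perm A = (N + 1) * perm A / (lam ^ 4 * s) by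
      field_simp, div_le_iff₀ (by positivity)]
    linarith
  · rw [show lam ^ 4 * (N + 1) * s⁻¹ * perm A = lam ^ 4 * ((N + 1) * perm A) / s by
      field_simp, le_div_iff₀ hs]
    linarith
  · gcongr ?_ * perm A
    calc lam ^ 4 * (N + 1) * s⁻¹ ≤ lam ^ 4 * (N + 1) * ((N + 1) ^ 2 * lam⁻¹)⁻¹ := by gcongr
      _ = lam ^ 5 * ((N + 1 : ℝ))⁻¹ := by field_simp
end

section
/- Let λ > 1 and let A = (a_{ij}) and B = (b_{ij}) be n × n matrices all of whose entries lie in [λ⁻¹, λ]. Then |log(per(B)/per(A))| ≤ λ⁴·n·(∑_{i,j} |b_{ij} − a_{ij}|)/min(∑_{i,j} a_{ij}, ∑_{i,j} b_{ij}) ≤ (λ⁵/n)·∑_{i,j} |b_{ij} − a_{ij}|. -/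
open scoped BigOperators Kronecker
open Matrix

/-!
Expanding the permanent along row `i` gives `per C = ∑ⱼ cᵢⱼ Qᵢⱼ`, where `Qᵢⱼ` is the permanent of
the `(i, j)` minor. Swapping the columns `j` and `j'` shows `Qᵢⱼ ≤ λ² Qᵢⱼ'`, hence `n Qᵢⱼ ≤ λ³ per C`.
Replacing the single entry `cᵢⱼ` by `b` changes the permanent by `(b - cᵢⱼ) Qᵢⱼ`, so `log per` moves
by at most `λ³/n · |b - cᵢⱼ|`. Turning `A` into `B` one entry at a time gives
`|log (per B / per A)| ≤ λ³/n · ∑ |bᵢⱼ - aᵢⱼ|`, and both stated bounds follow from this because the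
entry sums of `A` and `B` lie in `[n²/λ, n²λ]`.
-/

open Finset Real Function

lemma log_sub_log_le_div {x y : ℝ} (hx : 0 < x) (hy : 0 < y) :
    log x - log y ≤ (x - y) / y := by
  rw [← log_div hx.ne' hy.ne', sub_div, div_self hy.ne']
  exact log_le_sub_one_of_pos (div_pos hx hy)

lemma abs_log_sub_log_le {x y : ℝ} (hx : 0 < x) (hy : 0 < y) :
    |log x - log y| ≤ |x - y| / min x y := by
  have hm : 0 < min x y := lt_min hx hy
  rw [abs_sub_le_iff]
  constructor
  · refine (log_sub_log_le_div hx hy).trans ?_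
    exact div_le_div₀ (abs_nonneg _) (le_abs_self _) hm (min_le_right x y)
  · refine (log_sub_log_le_div hy hx).trans ?_
    rw [abs_sub_comm]
    exact div_le_div₀ (abs_nonneg _) (le_abs_self _) hm (min_le_left x y)

lemma abs_sub_le_mul_sum_of_abs_update_sub_le {α : Type*} [Fintype α] [DecidableEq α]
    {S : Set ℝ} {f : (α → ℝ) → ℝ} {K : ℝ}
    (hf : ∀ x, (∀ a, x a ∈ S) → ∀ a, ∀ t ∈ S, |f (update x a t) - f x| ≤ K * |t - x a|)
    {x y : α → ℝ} (hx : ∀ a, x a ∈ S) (hy : ∀ a, y a ∈ S) :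
    |f y - f x| ≤ K * ∑ a, |y a - x a| := by
  suffices h : ∀ s : Finset α, |f (s.piecewise y x) - f x| ≤ K * ∑ a ∈ s, |y a - x a| by
    simpa using h univ
  intro s
  induction s using Finset.induction_on with
  | empty => simp
  | insert a s ha ih =>
    have hmem : ∀ b, s.piecewise y x b ∈ S := fun b => by
      by_cases hb : b ∈ s <;> simp [hb, hx, hy]
    have hstep := hf _ hmem a (y a) (hy a)
    rw [piecewise_eq_of_notMem _ _ _ ha] at hstep
    rw [piecewise_insert, sum_insert ha, mul_add]
    calc _ ≤ |f (update (s.piecewise y x) a (y a)) - f (s.piecewise y x)|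
          + |f (s.piecewise y x) - f x| := abs_sub_le _ _ _
      _ ≤ _ := add_le_add hstep ih

lemma sum_entries_mem_Icc {ι κ : Type*} [Fintype ι] [Fintype κ] {C : Matrix ι κ ℝ} {lo hi : ℝ}
    (hC : ∀ i j, C i j ∈ Set.Icc lo hi) :
    ∑ i, ∑ j, C i j ∈ Set.Icc (Fintype.card ι * Fintype.card κ * lo)
      (Fintype.card ι * Fintype.card κ * hi) := by
  constructor
  · calc _ = ∑ _i : ι, ∑ _j : κ, lo := by simp [mul_assoc]
      _ ≤ _ := sum_le_sum fun i _ => sum_le_sum fun j _ => (hC i j).1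
  · calc _ ≤ ∑ _i : ι, ∑ _j : κ, hi := sum_le_sum fun i _ => sum_le_sum fun j _ => (hC i j).2
      _ = _ := by simp [mul_assoc]

variable {ι : Type*} [Fintype ι] [DecidableEq ι]

-- The permanent of the minor of `C` obtained by deleting row `i` and column `j`.
noncomputable def permMinor (C : Matrix ι ι ℝ) (i j : ι) : ℝ :=
  ∑ σ ∈ univ.filter (fun σ : Equiv.Perm ι => σ i = j), ∏ r ∈ univ.erase i, C r (σ r)

lemma perm_pos {C : Matrix ι ι ℝ} (hC : ∀ i j, 0 < C i j) : 0 < perm C :=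
  sum_pos (fun σ _ => prod_pos fun r _ => hC r (σ r)) univ_nonempty

lemma permMinor_nonneg {C : Matrix ι ι ℝ} (hC : ∀ i j, 0 ≤ C i j) (i j : ι) :
    0 ≤ permMinor C i j :=
  sum_nonneg fun σ _ => prod_nonneg fun r _ => hC r (σ r)

lemma perm_eq_sum_mul_permMinor (C : Matrix ι ι ℝ) (i : ι) :
    perm C = ∑ j, C i j * permMinor C i j := by
  rw [perm, ← sum_fiberwise univ (fun σ : Equiv.Perm ι => σ i)]
  refine sum_congr rfl fun j _ => ?_
  rw [permMinor, mul_sum]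
  refine sum_congr rfl fun σ hσ => ?_
  rw [← mul_prod_erase univ _ (mem_univ i), (mem_filter.mp hσ).2]

lemma permMinor_updateRow (C : Matrix ι ι ℝ) (i : ι) (v : ι → ℝ) (j : ι) :
    permMinor (C.updateRow i v) i j = permMinor C i j :=
  sum_congr rfl fun σ _ => prod_congr rfl fun r hr => by
    rw [updateRow_ne (mem_erase.mp hr).1]

lemma perm_updateRow_update (C : Matrix ι ι ℝ) (i j : ι) (b : ℝ) :
    perm (C.updateRow i (update (C i) j b)) = perm C + (b - C i j) * permMinor C i j := by
  rw [perm_eq_sum_mul_permMinor _ i, perm_eq_sum_mul_permMinor C i]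
  simp only [permMinor_updateRow, updateRow_self]
  rw [← sum_erase_add _ _ (mem_univ j), ← sum_erase_add _ _ (mem_univ j), update_self,
    sum_congr rfl fun j' hj' => by rw [update_of_ne (mem_erase.mp hj').1]]
  ring

lemma permMinor_eq_sum_swap (C : Matrix ι ι ℝ) (i j j' : ι) :
    permMinor C i j' = ∑ σ ∈ univ.filter (fun σ : Equiv.Perm ι => σ i = j),
      ∏ r ∈ univ.erase i, C r (Equiv.swap j j' (σ r)) :=
  (sum_equiv (Equiv.mulLeft (Equiv.swap j j')) (fun σ => by simp [Equiv.swap_apply_eq_iff])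
    fun _ _ => rfl).symm

lemma permMinor_le_mul_permMinor {C : Matrix ι ι ℝ} (hC : ∀ r c, 0 ≤ C r c) {κ : ℝ}
    {i j j' : ι} (hjj : j ≠ j') (hcol : ∀ r, C r j' ≤ κ * C r j) :
    permMinor C i j ≤ κ * permMinor C i j' := by
  rw [permMinor_eq_sum_swap C i j j', mul_sum]
  refine sum_le_sum fun σ hσ => ?_
  have hσi : σ i = j := (mem_filter.mp hσ).2
  -- `σ` and `swap j j' * σ` differ only in the row `r₀` that `σ` sends to column `j'`
  set r₀ := σ.symm j'
  have hr₀ : r₀ ∈ univ.erase i := by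
    refine mem_erase.mpr ⟨fun h => hjj ?_, mem_univ _⟩
    rw [← hσi, ← h, σ.apply_symm_apply]
  have hrest : ∏ r ∈ (univ.erase i).erase r₀, C r (Equiv.swap j j' (σ r))
      = ∏ r ∈ (univ.erase i).erase r₀, C r (σ r) := by
    refine prod_congr rfl fun r hr => ?_
    obtain ⟨hrr₀, hri⟩ := mem_erase.mp hr
    rw [Equiv.swap_apply_of_ne_of_ne]
    · exact fun h => (mem_erase.mp hri).1 (σ.injective (h.trans hσi.symm))
    · exact fun h => hrr₀ (σ.injective (h.trans (σ.apply_symm_apply j').symm))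
  rw [← mul_prod_erase _ _ hr₀, ← mul_prod_erase _ (fun r => C r (Equiv.swap j j' (σ r))) hr₀,
    hrest, σ.apply_symm_apply, Equiv.swap_apply_right, ← mul_assoc]
  exact mul_le_mul_of_nonneg_right (hcol r₀) (prod_nonneg fun r _ => hC r _)

lemma card_mul_permMinor_le {C : Matrix ι ι ℝ} {lam : ℝ} (hlam : 0 < lam)
    (hC : ∀ r c, C r c ∈ Set.Icc lam⁻¹ lam) (i j : ι) :
    Fintype.card ι * permMinor C i j ≤ lam ^ 3 * perm C := by
  have hCnn : ∀ r c, 0 ≤ C r c := fun r c => (inv_pos.mpr hlam).le.trans (hC r c).1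
  have hlam1 : 1 ≤ lam ^ 2 := by
    have := (hC i j).1.trans (hC i j).2
    rw [inv_le_iff_one_le_mul₀ hlam] at this
    nlinarith
  have hcmp : ∀ j', (lam ^ 2)⁻¹ * permMinor C i j ≤ permMinor C i j' := by
    intro j'
    rw [inv_mul_le_iff₀ (by positivity)]
    rcases eq_or_ne j j' with rfl | hjj
    · exact le_mul_of_one_le_left (permMinor_nonneg hCnn i j) hlam1
    refine permMinor_le_mul_permMinor hCnn hjj fun r => ?_
    calc C r j' ≤ lam := (hC r j').2
      _ = lam ^ 2 * lam⁻¹ := by field_simp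
      _ ≤ lam ^ 2 * C r j := by gcongr; exact (hC r j).1
  calc Fintype.card ι * permMinor C i j
        = lam ^ 3 * ∑ _j' : ι, lam⁻¹ * ((lam ^ 2)⁻¹ * permMinor C i j) := by
          rw [sum_const, card_univ, nsmul_eq_mul]; field_simp
    _ ≤ lam ^ 3 * ∑ j', C i j' * permMinor C i j' := by
          refine mul_le_mul_of_nonneg_left (sum_le_sum fun j' _ => ?_) (by positivity)
          exact mul_le_mul (hC i j').1 (hcmp j')
            (mul_nonneg (by positivity) (permMinor_nonneg hCnn i j)) (hCnn i j')
    _ = lam ^ 3 * perm C := by rw [perm_eq_sum_mul_permMinor C i]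

lemma abs_log_perm_updateRow_update_sub_le {C : Matrix ι ι ℝ} {lam : ℝ} (hlam : 0 < lam)
    (hC : ∀ r c, C r c ∈ Set.Icc lam⁻¹ lam) (i j : ι) {b : ℝ} (hb : b ∈ Set.Icc lam⁻¹ lam) :
    |log (perm (C.updateRow i (update (C i) j b))) - log (perm C)|
      ≤ lam ^ 3 / Fintype.card ι * |b - C i j| := by
  set C' := C.updateRow i (update (C i) j b)
  have hC' : ∀ r c, C' r c ∈ Set.Icc lam⁻¹ lam := by
    intro r c
    rcases eq_or_ne r i with rfl | hr
    · rcases eq_or_ne c j with rfl | hc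
      · simpa [C'] using hb
      · simpa [C', hc] using hC r c
    · simpa [C', hr] using hC r c
  have hpos : ∀ D : Matrix ι ι ℝ, (∀ r c, D r c ∈ Set.Icc lam⁻¹ lam) → 0 < perm D :=
    fun D hD => perm_pos fun r c => (inv_pos.mpr hlam).trans_le (hD r c).1
  have hm : 0 < min (perm C') (perm C) := lt_min (hpos C' hC') (hpos C hC)
  have hQ : permMinor C i j ≤ lam ^ 3 / Fintype.card ι * min (perm C') (perm C) := by
    have hcard : (0 : ℝ) < Fintype.card ι := Nat.cast_pos.mpr (Fintype.card_pos_iff.mpr ⟨i⟩)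
    rw [div_mul_eq_mul_div, le_div_iff₀ hcard, mul_comm, mul_min_of_nonneg _ _ (by positivity)]
    refine le_min ?_ (card_mul_permMinor_le hlam hC i j)
    simpa [C', permMinor_updateRow] using card_mul_permMinor_le hlam hC' i j
  have hQ0 : 0 ≤ permMinor C i j :=
    permMinor_nonneg (fun r c => (inv_pos.mpr hlam).le.trans (hC r c).1) i j
  calc _ ≤ |perm C' - perm C| / min (perm C') (perm C) :=
        abs_log_sub_log_le (hpos C' hC') (hpos C hC)
    _ = |b - C i j| * permMinor C i j / min (perm C') (perm C) := by
        rw [perm_updateRow_update, add_sub_cancel_left, abs_mul, abs_of_nonneg hQ0]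
    _ ≤ |b - C i j| * (lam ^ 3 / Fintype.card ι * min (perm C') (perm C))
          / min (perm C') (perm C) := by gcongr
    _ = lam ^ 3 / Fintype.card ι * |b - C i j| := by field_simp

theorem abs_log_perm_div_le {A B : Matrix ι ι ℝ} {lam : ℝ} (hlam : 0 < lam)
    (hA : ∀ i j, A i j ∈ Set.Icc lam⁻¹ lam) (hB : ∀ i j, B i j ∈ Set.Icc lam⁻¹ lam) :
    |log (perm B / perm A)| ≤ lam ^ 3 / Fintype.card ι * ∑ i, ∑ j, |B i j - A i j| := by
  have hpos : ∀ D : Matrix ι ι ℝ, (∀ r c, D r c ∈ Set.Icc lam⁻¹ lam) → 0 < perm D :=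
    fun D hD => perm_pos fun r c => (inv_pos.mpr hlam).trans_le (hD r c).1
  have hentry : ∀ (x : ι × ι → ℝ), (∀ p, x p ∈ Set.Icc lam⁻¹ lam) → ∀ p, ∀ t ∈ Set.Icc lam⁻¹ lam,
      |log (perm (of (curry (update x p t)))) - log (perm (of (curry x)))|
        ≤ lam ^ 3 / Fintype.card ι * |t - x p| := by
    rintro x hx ⟨i, j⟩ t ht
    have hupd : of (curry (update x (i, j) t))
        = (of (curry x)).updateRow i (update (x ⟨i, ·⟩) j t) := by
      ext r c
      by_cases hr : r = i <;> by_cases hc : c = j <;> simp [hr, hc, updateRow_apply]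
    rw [hupd]
    exact abs_log_perm_updateRow_update_sub_le hlam (fun r c => hx (r, c)) i j ht
  rw [log_div (hpos B hB).ne' (hpos A hA).ne', ← Fintype.sum_prod_type']
  exact abs_sub_le_mul_sum_of_abs_update_sub_le hentry
    (f := fun x => log (perm (of (curry x)))) (x := uncurry A) (y := uncurry B)
    (fun p => hA p.1 p.2) (fun p => hB p.1 p.2)

/-- Regularity estimate for the permanent: if all entries of the `n × n`
matrices `A` and `B` lie in `[λ⁻¹, λ]`, then
`|log(per B / per A)| ≤ λ⁴·n·∑|bᵢⱼ−aᵢⱼ| / min(∑aᵢⱼ, ∑bᵢⱼ) ≤ (λ⁵/n)·∑|bᵢⱼ−aᵢⱼ|`. -/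
theorem stmt_13 {n : ℕ} (lam : ℝ) (hlam : 1 < lam)
    (A B : Matrix (Fin n) (Fin n) ℝ)
    (hA : ∀ i j, lam⁻¹ ≤ A i j ∧ A i j ≤ lam)
    (hB : ∀ i j, lam⁻¹ ≤ B i j ∧ B i j ≤ lam) :
    |Real.log (perm B / perm A)| ≤
        lam ^ 4 * n * (∑ i, ∑ j, |B i j - A i j|) /
          min (∑ i, ∑ j, A i j) (∑ i, ∑ j, B i j) ∧
    lam ^ 4 * n * (∑ i, ∑ j, |B i j - A i j|) /
          min (∑ i, ∑ j, A i j) (∑ i, ∑ j, B i j) ≤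
        lam ^ 5 / n * ∑ i, ∑ j, |B i j - A i j| := by
  have hlam0 : 0 < lam := one_pos.trans hlam
  obtain rfl | hn := Nat.eq_zero_or_pos n
  · simp [perm]
  have hn' : (0 : ℝ) < n := Nat.cast_pos.mpr hn
  have hlog := abs_log_perm_div_le hlam0 hA hB
  obtain ⟨hAlo, hAhi⟩ := sum_entries_mem_Icc hA
  obtain ⟨hBlo, -⟩ := sum_entries_mem_Icc hB
  simp only [Fintype.card_fin] at hlog hAlo hAhi hBlo
  set Δ := ∑ i, ∑ j, |B i j - A i j|
  set m := min (∑ i, ∑ j, A i j) (∑ i, ∑ j, B i j)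
  have hΔ : 0 ≤ Δ := by positivity
  have hm_lo : n * n * lam⁻¹ ≤ m := le_min hAlo hBlo
  have hm_hi : m ≤ n * n * lam := (min_le_left _ _).trans hAhi
  have hm : 0 < m := lt_of_lt_of_le (by positivity) hm_lo
  refine ⟨hlog.trans ?_, ?_⟩
  · rw [div_mul_eq_mul_div, div_le_div_iff₀ hn' hm]
    nlinarith [mul_nonneg (mul_nonneg (pow_pos hlam0 3).le hΔ) (sub_nonneg.mpr hm_hi)]
  · rw [div_mul_eq_mul_div, div_le_div_iff₀ hm hn']
    have hlamm : n * n ≤ lam * m := by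
      calc (n : ℝ) * n = lam * (n * n * lam⁻¹) := by field_simp
        _ ≤ lam * m := by gcongr
    nlinarith [mul_nonneg (mul_nonneg (pow_pos hlam0 4).le hΔ) (sub_nonneg.mpr hlamm)]
end

section
/- There exists a constant C > 1 such that for every λ > 1, every integer n ≥ 2, every n × n matrix A all of whose entries lie in [λ⁻¹, λ], and all indices i, j ∈ {1,…,n}: |log(pm(A(i|j))/pm(A))| ≤ (6·log λ + C·log n)/n, where A(i|j) denotes the matrix obtained from A by deleting the i-th row and the j-th column. -/
open scoped BigOperators Kronecker
open Matrix

section Decomp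
variable {N : ℕ}

noncomputable def decompAux (i j k : Fin (N + 1)) (τ : Equiv.Perm (Fin N)) :
    Equiv.Perm (Fin (N + 1)) :=
  (((finSuccEquiv' i).trans (Equiv.optionCongr τ)).trans (finSuccEquiv' j).symm).trans
    (Equiv.swap j k)

lemma decompAux_apply_self (i j k : Fin (N + 1)) (τ : Equiv.Perm (Fin N)) :
    decompAux i j k τ i = k := by
  simp [decompAux, finSuccEquiv'_at, finSuccEquiv'_symm_none, Equiv.swap_apply_left]

lemma decompAux_apply_succAbove (i j k : Fin (N + 1)) (τ : Equiv.Perm (Fin N)) (r : Fin N) :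
    decompAux i j k τ (i.succAbove r) = Equiv.swap j k (j.succAbove (τ r)) := by
  simp [decompAux, finSuccEquiv'_succAbove, finSuccEquiv'_symm_some]

lemma decompAux_bijective (i j : Fin (N + 1)) :
    Function.Bijective (fun p : Fin (N + 1) × Equiv.Perm (Fin N) => decompAux i j p.1 p.2) := by
  rw [Fintype.bijective_iff_injective_and_card]
  constructor
  · rintro ⟨k, τ⟩ ⟨k', τ'⟩ h
    simp only at h
    have hk : k = k' := by
      have := congrArg (fun σ : Equiv.Perm (Fin (N + 1)) => σ i) h
      simpa [decompAux_apply_self] using this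
    subst hk
    refine Prod.ext rfl ?_
    ext r
    have h2 := congrArg (fun σ : Equiv.Perm (Fin (N + 1)) => σ (i.succAbove r)) h
    simp only [decompAux_apply_succAbove] at h2
    exact congrArg Fin.val (Fin.succAbove_right_injective ((Equiv.swap j k).injective h2))
  · simp [Fintype.card_perm, Nat.factorial_succ]

end Decomp

/-- If `f` and `g` take values in `[lam⁻¹, lam]` and differ in at most one point, then
`∏ f ≤ lam² ∏ g`. -/
lemma one_point_prod_le {α : Type*} [Fintype α] [DecidableEq α] {f g : α → ℝ} {lam : ℝ} (hlam : 1 < lam)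
    (hf : ∀ a, lam⁻¹ ≤ f a ∧ f a ≤ lam) (hg : ∀ a, lam⁻¹ ≤ g a ∧ g a ≤ lam)
    (h1 : ∀ a b, f a ≠ g a → f b ≠ g b → a = b) :
    ∏ a, f a ≤ lam * lam * ∏ a, g a := by
  have hlam0 : (0:ℝ) < lam := lt_trans one_pos hlam
  have hinv : (0:ℝ) < lam⁻¹ := inv_pos.mpr hlam0
  have hgpos : ∀ a, (0:ℝ) < g a := fun a => lt_of_lt_of_le hinv (hg a).1
  have hfpos : ∀ a, (0:ℝ) < f a := fun a => lt_of_lt_of_le hinv (hf a).1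
  by_cases hex : ∃ a, f a ≠ g a
  · obtain ⟨a₀, hne⟩ := hex
    have heq : ∀ b ∈ Finset.univ.erase a₀, f b = g b := by
      intro b hb
      by_contra hb'
      exact Finset.ne_of_mem_erase hb (h1 b a₀ hb' hne)
    rw [← Finset.mul_prod_erase Finset.univ f (Finset.mem_univ a₀),
        ← Finset.mul_prod_erase Finset.univ g (Finset.mem_univ a₀),
        Finset.prod_congr rfl heq]
    have hP : (0:ℝ) ≤ ∏ b ∈ Finset.univ.erase a₀, g b :=
      Finset.prod_nonneg fun b _ => (hgpos b).le
    have key : f a₀ ≤ lam * lam * g a₀ := by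
      have h2 : lam * lam * lam⁻¹ ≤ lam * lam * g a₀ := by
        have := (hg a₀).1
        nlinarith
      have h3 : lam * lam * lam⁻¹ = lam := by field_simp
      calc f a₀ ≤ lam := (hf a₀).2
        _ = lam * lam * lam⁻¹ := h3.symm
        _ ≤ lam * lam * g a₀ := h2
    calc f a₀ * ∏ b ∈ Finset.univ.erase a₀, g b
        ≤ (lam * lam * g a₀) * ∏ b ∈ Finset.univ.erase a₀, g b :=
          mul_le_mul_of_nonneg_right key hP
      _ = lam * lam * (g a₀ * ∏ b ∈ Finset.univ.erase a₀, g b) := by ring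
  · push_neg at hex
    have : ∏ a, f a = ∏ a, g a := Finset.prod_congr rfl fun a _ => hex a
    rw [this]
    have hP : (0:ℝ) ≤ ∏ a, g a := Finset.prod_nonneg fun a _ => (hgpos a).le
    have h1 : (1:ℝ) ≤ lam * lam := by nlinarith
    nlinarith

lemma swap_diff_unique {N : ℕ} (i j k : Fin (N + 1)) (τ : Equiv.Perm (Fin N))
    (A : Matrix (Fin (N + 1)) (Fin (N + 1)) ℝ) :
    ∀ a b : Fin N,
      A (i.succAbove a) (Equiv.swap j k (j.succAbove (τ a))) ≠ A (i.succAbove a) (j.succAbove (τ a)) →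
      A (i.succAbove b) (Equiv.swap j k (j.succAbove (τ b))) ≠ A (i.succAbove b) (j.succAbove (τ b)) →
      a = b := by
  intro a b ha hb
  have hka : j.succAbove (τ a) = k := by
    by_contra hk
    have hj : j.succAbove (τ a) ≠ j := Fin.succAbove_ne j (τ a)
    rw [Equiv.swap_apply_of_ne_of_ne hj hk] at ha
    exact ha rfl
  have hkb : j.succAbove (τ b) = k := by
    by_contra hk
    have hj : j.succAbove (τ b) ≠ j := Fin.succAbove_ne j (τ b)
    rw [Equiv.swap_apply_of_ne_of_ne hj hk] at hb
    exact hb rfl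
  exact τ.injective (Fin.succAbove_right_injective (hka.trans hkb.symm))

lemma perm_expansion {N : ℕ} (A : Matrix (Fin (N + 1)) (Fin (N + 1)) ℝ) (i j : Fin (N + 1)) :
    perm A = ∑ k : Fin (N + 1), ∑ τ : Equiv.Perm (Fin N),
      A i k * ∏ r : Fin N, A (i.succAbove r) (Equiv.swap j k (j.succAbove (τ r))) := by
  have h1 : perm A = ∑ p : Fin (N + 1) × Equiv.Perm (Fin N),
      ∏ x : Fin (N + 1), A x (decompAux i j p.1 p.2 x) :=
    ((decompAux_bijective i j).sum_comp fun σ => ∏ x, A x (σ x)).symm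
  rw [h1, Fintype.sum_prod_type]
  refine Finset.sum_congr rfl fun k _ => Finset.sum_congr rfl fun τ _ => ?_
  rw [Fin.prod_univ_succAbove (fun x => A x (decompAux i j k τ x)) i,
    decompAux_apply_self]
  congr 1
  exact Finset.prod_congr rfl fun r _ => by rw [decompAux_apply_succAbove]

set_option maxHeartbeats 1000000 in
lemma perm_minor_bound {N : ℕ} {lam : ℝ} (hlam : 1 < lam)
    (A : Matrix (Fin (N + 1)) (Fin (N + 1)) ℝ)
    (hA : ∀ a b, lam⁻¹ ≤ A a b ∧ A a b ≤ lam) (i j : Fin (N + 1)) :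
    ((N : ℝ) + 1) * (lam⁻¹ * lam⁻¹ * lam⁻¹) * perm (A.submatrix i.succAbove j.succAbove)
      ≤ perm A ∧
    perm A ≤ ((N : ℝ) + 1) * (lam * lam * lam) * perm (A.submatrix i.succAbove j.succAbove) := by
  have hlam0 : (0:ℝ) < lam := lt_trans one_pos hlam
  have hinv : (0:ℝ) < lam⁻¹ := inv_pos.mpr hlam0
  have hP' : perm (A.submatrix i.succAbove j.succAbove) =
      ∑ τ : Equiv.Perm (Fin N), ∏ r : Fin N, A (i.succAbove r) (j.succAbove (τ r)) := rfl
  set G : Equiv.Perm (Fin N) → ℝ :=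
    fun τ => ∏ r : Fin N, A (i.succAbove r) (j.succAbove (τ r)) with hG
  have hGpos : ∀ τ, 0 < G τ :=
    fun τ => Finset.prod_pos fun r _ => lt_of_lt_of_le hinv (hA _ _).1
  have key : ∀ (k : Fin (N + 1)) (τ : Equiv.Perm (Fin N)),
      lam⁻¹ * (lam⁻¹ * lam⁻¹ * G τ) ≤
        A i k * ∏ r : Fin N, A (i.succAbove r) (Equiv.swap j k (j.succAbove (τ r))) ∧
      A i k * ∏ r : Fin N, A (i.succAbove r) (Equiv.swap j k (j.succAbove (τ r))) ≤
        lam * (lam * lam * G τ) := by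
    intro k τ
    set F : ℝ := ∏ r : Fin N, A (i.succAbove r) (Equiv.swap j k (j.succAbove (τ r))) with hF
    have hFpos : 0 < F := Finset.prod_pos fun r _ => lt_of_lt_of_le hinv (hA _ _).1
    have hFG : F ≤ lam * lam * G τ :=
      one_point_prod_le hlam (fun r => hA _ _) (fun r => hA _ _)
        (swap_diff_unique i j k τ A)
    have hGF : G τ ≤ lam * lam * F :=
      one_point_prod_le hlam (fun r => hA _ _) (fun r => hA _ _)
        (fun a b ha hb => swap_diff_unique i j k τ A a b (Ne.symm ha) (Ne.symm hb))
    constructor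
    · have h1 : lam⁻¹ * lam⁻¹ * G τ ≤ F := by
        rw [← mul_inv]
        have := mul_le_mul_of_nonneg_left hGF (le_of_lt (inv_pos.mpr (by positivity : (0:ℝ) < lam * lam)))
        calc (lam*lam)⁻¹ * G τ ≤ (lam*lam)⁻¹ * (lam*lam*F) := this
          _ = F := by field_simp
      calc lam⁻¹ * (lam⁻¹ * lam⁻¹ * G τ) ≤ lam⁻¹ * F :=
            mul_le_mul_of_nonneg_left h1 hinv.le
        _ ≤ A i k * F := mul_le_mul_of_nonneg_right (hA i k).1 hFpos.le
    · calc A i k * F ≤ lam * F := mul_le_mul_of_nonneg_right (hA i k).2 hFpos.le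
        _ ≤ lam * (lam * lam * G τ) := mul_le_mul_of_nonneg_left hFG hlam0.le
  rw [perm_expansion A i j, hP']
  constructor
  · calc ((N : ℝ) + 1) * (lam⁻¹ * lam⁻¹ * lam⁻¹) * ∑ τ, G τ
        = ∑ _k : Fin (N + 1), ∑ τ, lam⁻¹ * (lam⁻¹ * lam⁻¹ * G τ) := by
          simp only [← Finset.mul_sum, Finset.sum_const, Finset.card_univ, Fintype.card_fin,
            nsmul_eq_mul]
          push_cast
          ring
      _ ≤ ∑ k, ∑ τ, A i k * ∏ r : Fin N, A (i.succAbove r)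
            (Equiv.swap j k (j.succAbove (τ r))) :=
          Finset.sum_le_sum fun k _ => Finset.sum_le_sum fun τ _ => (key k τ).1
  · calc (∑ k, ∑ τ, A i k * ∏ r : Fin N, A (i.succAbove r)
            (Equiv.swap j k (j.succAbove (τ r))))
        ≤ ∑ _k : Fin (N + 1), ∑ τ, lam * (lam * lam * G τ) :=
          Finset.sum_le_sum fun k _ => Finset.sum_le_sum fun τ _ => (key k τ).2
      _ = ((N : ℝ) + 1) * (lam * lam * lam) * ∑ τ, G τ := by
          simp only [← Finset.mul_sum, Finset.sum_const, Finset.card_univ, Fintype.card_fin,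
            nsmul_eq_mul]
          push_cast
          ring

lemma perm_pos_s14 {M : ℕ} (A : Matrix (Fin M) (Fin M) ℝ) (h : ∀ a b, 0 < A a b) :
    0 < perm A :=
  Finset.sum_pos (fun σ _ => Finset.prod_pos fun r _ => h _ _) Finset.univ_nonempty

lemma perm_bounds {M : ℕ} {lam : ℝ} (hlam : 1 < lam) (A : Matrix (Fin M) (Fin M) ℝ)
    (hA : ∀ a b, lam⁻¹ ≤ A a b ∧ A a b ≤ lam) :
    (Nat.factorial M : ℝ) * (lam⁻¹) ^ M ≤ perm A ∧
      perm A ≤ (Nat.factorial M : ℝ) * lam ^ M := by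
  have hinv : (0:ℝ) < lam⁻¹ := inv_pos.mpr (lt_trans one_pos hlam)
  constructor
  · calc (Nat.factorial M : ℝ) * (lam⁻¹) ^ M
        = ∑ _σ : Equiv.Perm (Fin M), ∏ _r : Fin M, lam⁻¹ := by
          simp [Finset.prod_const, Finset.sum_const, Finset.card_univ, Fintype.card_perm,
            nsmul_eq_mul]
      _ ≤ ∑ σ : Equiv.Perm (Fin M), ∏ r : Fin M, A r (σ r) :=
          Finset.sum_le_sum fun σ _ => Finset.prod_le_prod (fun r _ => hinv.le)
            (fun r _ => (hA _ _).1)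
      _ = perm A := rfl
  · calc perm A = ∑ σ : Equiv.Perm (Fin M), ∏ r : Fin M, A r (σ r) := rfl
      _ ≤ ∑ _σ : Equiv.Perm (Fin M), ∏ _r : Fin M, lam := by
          refine Finset.sum_le_sum fun σ _ => Finset.prod_le_prod
            (fun r _ => (lt_of_lt_of_le hinv (hA _ _).1).le) (fun r _ => (hA _ _).2)
      _ = (Nat.factorial M : ℝ) * lam ^ M := by
          simp [Finset.prod_const, Finset.sum_const, Finset.card_univ, Fintype.card_perm,
            nsmul_eq_mul]

lemma abs_arith (n L Ln u e F lp lp' : ℝ) (hn : 1 ≤ n) (hL : 0 < L) (hLn : 0 ≤ Ln)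
    (hu : |u| ≤ n * L) (he : |e| ≤ 3 * L)
    (hudef : u = lp' - F) (hedef : e = lp - Ln - lp') :
    |n⁻¹ * (lp' - F) - (n + 1)⁻¹ * (lp - Ln - F)| ≤ (6 * L + 2 * Ln) / (n + 1) := by
  have hn0 : (0:ℝ) < n := lt_of_lt_of_le one_pos hn
  have hn1 : (0:ℝ) < n + 1 := by linarith
  have heq : n⁻¹ * (lp' - F) - (n + 1)⁻¹ * (lp - Ln - F)
      = u / (n * (n + 1)) - e / (n + 1) := by
    subst hudef hedef
    field_simp
    ring
  rw [heq]
  have h1 : |u / (n * (n + 1))| ≤ L / (n + 1) := by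
    rw [abs_div, abs_of_pos (by positivity : (0:ℝ) < n * (n + 1))]
    have : |u| / (n * (n + 1)) ≤ (n * L) / (n * (n + 1)) := by gcongr
    calc |u| / (n * (n + 1)) ≤ (n * L) / (n * (n + 1)) := this
      _ = L / (n + 1) := mul_div_mul_left _ _ hn0.ne'
  have h2 : |e / (n + 1)| ≤ 3 * L / (n + 1) := by
    rw [abs_div, abs_of_pos hn1]
    gcongr
  calc |u / (n * (n + 1)) - e / (n + 1)|
      ≤ |u / (n * (n + 1))| + |e / (n + 1)| := abs_sub _ _
    _ ≤ L / (n + 1) + 3 * L / (n + 1) := add_le_add h1 h2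
    _ = (4 * L) / (n + 1) := by ring
    _ ≤ (6 * L + 2 * Ln) / (n + 1) := by gcongr <;> linarith


/-- There is a constant `C > 1` such that for every `λ > 1`, every `n ≥ 2`
(here `n = N + 1` with `N ≥ 1`), every `λ`-bounded `n × n` matrix `A`, and all
indices `i`, `j`: `|log (pm A(i|j) / pm A)| ≤ (6 log λ + C log n)/n`. -/
theorem stmt_14 :
    ∃ C : ℝ, 1 < C ∧
      ∀ (lam : ℝ), 1 < lam →
      ∀ (N : ℕ), 1 ≤ N →
      ∀ A : Matrix (Fin (N + 1)) (Fin (N + 1)) ℝ,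
        (∀ i j, lam⁻¹ ≤ A i j ∧ A i j ≤ lam) →
        ∀ i j : Fin (N + 1),
          |Real.log (pm (A.submatrix i.succAbove j.succAbove) / pm A)| ≤
            (6 * Real.log lam + C * Real.log (N + 1)) / (N + 1) := by
  refine ⟨2, one_lt_two, fun lam hlam N hN A hA i j => ?_⟩
  have hlam0 : (0:ℝ) < lam := lt_trans one_pos hlam
  have hinv : (0:ℝ) < lam⁻¹ := inv_pos.mpr hlam0
  have hApos : ∀ a b, 0 < A a b := fun a b => lt_of_lt_of_le hinv (hA a b).1
  have hA' : ∀ a b, lam⁻¹ ≤ (A.submatrix i.succAbove j.succAbove) a b ∧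
      (A.submatrix i.succAbove j.succAbove) a b ≤ lam := fun a b => hA _ _
  set P := perm A with hP
  set P' := perm (A.submatrix i.succAbove j.succAbove) with hP'def
  have hPpos : 0 < P := perm_pos_s14 A hApos
  have hP'pos : 0 < P' := perm_pos_s14 _ fun a b => lt_of_lt_of_le hinv (hA' a b).1
  have hfacN : (0:ℝ) < (Nat.factorial N : ℝ) := by positivity
  have hn0 : (0:ℝ) < (N:ℝ) := by exact_mod_cast Nat.pos_of_ne_zero (by omega)
  have hn1 : (0:ℝ) < (N:ℝ) + 1 := by linarith
  set L := Real.log lam with hL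
  have hLpos : 0 < L := Real.log_pos hlam
  set F := Real.log (Nat.factorial N : ℝ) with hF
  set Ln := Real.log ((N:ℝ) + 1) with hLn
  have hLn0 : 0 ≤ Ln := Real.log_nonneg (by linarith)
  -- bounds on log P'
  have hb := perm_bounds hlam (A.submatrix i.succAbove j.succAbove) hA'
  have hu_up : Real.log P' ≤ F + (N:ℝ) * L := by
    have h := Real.log_le_log hP'pos hb.2
    rwa [Real.log_mul hfacN.ne' (by positivity), Real.log_pow] at h
  have hu_lo : F - (N:ℝ) * L ≤ Real.log P' := by
    have h := Real.log_le_log (by positivity) hb.1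
    rwa [Real.log_mul hfacN.ne' (by positivity), Real.log_pow, Real.log_inv,
      mul_neg, ← sub_eq_add_neg] at h
  -- bounds on log P vs log P'
  have hmb := perm_minor_bound hlam A hA i j
  have he_up : Real.log P ≤ Ln + 3 * L + Real.log P' := by
    have h := Real.log_le_log hPpos hmb.2
    rwa [Real.log_mul (by positivity) hP'pos.ne', Real.log_mul hn1.ne' (by positivity),
      Real.log_mul (by positivity) hlam0.ne', Real.log_mul hlam0.ne' hlam0.ne',
      show Real.log ((N:ℝ)+1) + (Real.log lam + Real.log lam + Real.log lam) + Real.log P'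
        = Ln + 3 * L + Real.log P' by rw [hLn, hL]; ring] at h
  have he_lo : Ln - 3 * L + Real.log P' ≤ Real.log P := by
    have h := Real.log_le_log (by positivity) hmb.1
    rwa [Real.log_mul (by positivity) hP'pos.ne', Real.log_mul hn1.ne' (by positivity),
      Real.log_mul (by positivity) hinv.ne', Real.log_mul hinv.ne' hinv.ne', Real.log_inv,
      show Real.log ((N:ℝ)+1) + (-Real.log lam + -Real.log lam + -Real.log lam) + Real.log P'
        = Ln - 3 * L + Real.log P' by rw [hLn, hL]; ring] at h
  -- logs of pm
  have hpmA'pos : 0 < pm (A.submatrix i.succAbove j.succAbove) :=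
    Real.rpow_pos_of_pos (by positivity) _
  have hpmApos : 0 < pm A := Real.rpow_pos_of_pos (by positivity) _
  have hpmA' : Real.log (pm (A.submatrix i.succAbove j.succAbove)) =
      ((N:ℝ))⁻¹ * (Real.log P' - F) := by
    rw [pm]
    simp only [Fintype.card_fin]
    rw [Real.log_rpow (by positivity), Real.log_div hP'pos.ne' hfacN.ne']
  have hpmA : Real.log (pm A) = (((N:ℝ)) + 1)⁻¹ * (Real.log P - Ln - F) := by
    rw [pm]
    simp only [Fintype.card_fin]
    rw [Real.log_rpow (by positivity), Real.log_div hPpos.ne' (by positivity),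
      Nat.factorial_succ, Nat.cast_mul, Nat.cast_add, Nat.cast_one,
      Real.log_mul hn1.ne' hfacN.ne']
    ring
  rw [Real.log_div hpmA'pos.ne' hpmApos.ne', hpmA', hpmA]
  have key := abs_arith (N:ℝ) L Ln (Real.log P' - F) (Real.log P - Ln - Real.log P') F
    (Real.log P) (Real.log P') (by exact_mod_cast hN) hLpos hLn0
    (abs_le.mpr ⟨by linarith, by linarith⟩) (abs_le.mpr ⟨by linarith, by linarith⟩) rfl rfl
  calc |((N:ℝ))⁻¹ * (Real.log P' - F) - ((N:ℝ) + 1)⁻¹ * (Real.log P - Ln - F)|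
      ≤ (6 * L + 2 * Ln) / ((N:ℝ) + 1) := key
    _ = (6 * Real.log lam + 2 * Real.log ((N:ℕ) + 1)) / ((N:ℕ) + 1) := by push_cast; rw [hL, hLn]
end
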